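/- For each fixed $F\in(1,3/2)$, let $L(\mu)$ denote the value $z_r^{-2F}\bigl((z_r-1)(D(z_r-1)-1)\bigr)^2-2h_0(\mu)\bigl(D(F-2)z_r^2-(2D+1)(F-1)z_r+F(D+1)\bigr)$ at $z_r=1-p_1(\mu)$, $\mu=(D,F)$. Then $L>0$ at the boundary parameter values $D=-F$ and $D=-1/2$: namely $L((-F,F))=1/F^2$ and $L((-\tfrac12,F))=\tfrac{F^F(F-1)^{1-F}+2-3F}{4F^2(F-1)}$, and both are strictly positive for $F\in(1,3/2)$. -/

import Mathlib

open Real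

noncomputable def aQ (D F : ℝ) : ℝ := D/(2*(1-F))
noncomputable def bQ (D F : ℝ) : ℝ := (D-F+1)/((1-F)*(1-2*F))
noncomputable def cQ (D F : ℝ) : ℝ := (F-D-1)/(2*F*(1-F)*(1-2*F))
noncomputable def p1Q (D F : ℝ) : ℝ :=
  (-(bQ D F) - Real.sqrt ((bQ D F)^2 - 4*(aQ D F)*(cQ D F)))/(2*(aQ D F))
noncomputable def h0Q (D F : ℝ) : ℝ := (F-D-1)/(2*F*(F-1)*(2*F-1))
noncomputable def LQ (D F : ℝ) : ℝ :=
  (1 - p1Q D F) ^ (-(2*F)) * (((1 - p1Q D F) - 1) * (D * ((1 - p1Q D F) - 1) - 1))^2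
    - 2 * h0Q D F *
      (D*(F-2) * (1 - p1Q D F)^2 - (2*D+1)*(F-1) * (1 - p1Q D F) + F*(D+1))

/-!
At `D = -F` the discriminant of the quadratic vanishes, `p₁ = 1/F`, and `D (z_r - 1) - 1 = 0`,
so only the polynomial part of `L` survives. At `D = -1/2` one finds `z_r = √((F-1)/F)`, hence
`z_r^(-2F) = F^F (F-1)^(1-F) / (F-1)`, and positivity reduces to `3F - 2 < F^F (F-1)^(1-F)`.
Taking logarithms, this says `g(F) = negMulLog (F-1) - negMulLog F - log (3F-2) > 0`.
Now `g(1) = 0` and `g''(F)` has the sign of `3F - 4`: so `g` is concave on `[1, 4/3]`, while on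
`[4/3, 3/2]` its derivative is increasing and `g'(3/2) = log 3 - 6/5 < 0`, so `g` decreases there
to `g(3/2) = log (27/25) / 2 > 0`.
-/

open Set

noncomputable def boundaryGap (F : ℝ) : ℝ := negMulLog (F - 1) - negMulLog F - log (3 * F - 2)
noncomputable def boundaryGap' (F : ℝ) : ℝ := log F - log (F - 1) - 3 / (3 * F - 2)
noncomputable def boundaryGap'' (F : ℝ) : ℝ := (3 * F - 4) / (F * (F - 1) * (3 * F - 2) ^ 2)

lemma hasDerivAt_boundaryGap {F : ℝ} (hF : 1 < F) :
    HasDerivAt boundaryGap (boundaryGap' F) F := by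
  have h1 : HasDerivAt (fun x => negMulLog (x - 1)) (-log (F - 1) - 1) F :=
    (hasDerivAt_negMulLog (by linarith)).comp_sub_const F 1
  have h2 := hasDerivAt_negMulLog (x := F) (by linarith)
  have h3 : HasDerivAt (fun x => log (3 * x - 2)) (3 / (3 * F - 2)) F := by
    simpa using (((hasDerivAt_id F).const_mul 3).sub_const 2).log (by simp; linarith)
  refine ((h1.sub h2).sub h3).congr_deriv ?_
  rw [boundaryGap']; ring

lemma hasDerivAt_boundaryGap' {F : ℝ} (hF : 1 < F) :
    HasDerivAt boundaryGap' (boundaryGap'' F) F := by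
  have h0 : F ≠ 0 := by linarith
  have h1 : F - 1 ≠ 0 := by linarith
  have h2 : (3 * F - 2) ^ 2 ≠ 0 := pow_ne_zero 2 (by linarith)
  have hlog := hasDerivAt_log h0
  have hlog_sub : HasDerivAt (fun x => log (x - 1)) (1 / (F - 1)) F := by
    simpa using (hasDerivAt_log h1).comp_sub_const F 1
  have hinv : HasDerivAt (fun x => 3 / (3 * x - 2)) (-(9 / (3 * F - 2) ^ 2)) F := by
    refine ((hasDerivAt_const F (3 : ℝ)).div (((hasDerivAt_id F).const_mul 3).sub_const 2)
      (by simp; linarith)).congr_deriv ?_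
    simp; ring
  refine ((hlog.sub hlog_sub).sub hinv).congr_deriv ?_
  rw [boundaryGap'', inv_eq_one_div, sub_neg_eq_add, div_sub_div _ _ h0 h1,
    div_add_div _ _ (mul_ne_zero h0 h1) h2, div_eq_div_iff (by positivity) (by positivity)]
  ring

lemma continuousOn_boundaryGap : ContinuousOn boundaryGap (Ici 1) := by
  refine ((continuous_negMulLog.comp (continuous_sub_right 1)).sub
    continuous_negMulLog).continuousOn.sub (ContinuousOn.log (by fun_prop) fun F hF => ?_)
  have : (1 : ℝ) ≤ F := hF
  linarith

lemma boundaryGap_one : boundaryGap 1 = 0 := by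
  norm_num [boundaryGap]

lemma concaveOn_boundaryGap : ConcaveOn ℝ (Icc 1 (4 / 3)) boundaryGap := by
  refine concaveOn_of_hasDerivWithinAt2_nonpos (f' := boundaryGap') (f'' := boundaryGap'')
    (convex_Icc _ _) (continuousOn_boundaryGap.mono Icc_subset_Ici_self) ?_ ?_ ?_
  all_goals simp only [interior_Icc]
  · exact fun F hF => (hasDerivAt_boundaryGap hF.1).hasDerivWithinAt
  · exact fun F hF => (hasDerivAt_boundaryGap' hF.1).hasDerivWithinAt
  · intro F hF
    have : 0 < F - 1 := by linarith [hF.1]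
    have : 0 < F := by linarith [hF.1]
    exact div_nonpos_of_nonpos_of_nonneg (by linarith [hF.2]) (by positivity)

lemma monotoneOn_boundaryGap' : MonotoneOn boundaryGap' (Ici (4 / 3)) := by
  refine monotoneOn_of_hasDerivWithinAt_nonneg (f' := boundaryGap'') (convex_Ici _)
    (fun F hF => (hasDerivAt_boundaryGap' (by linarith [hF.out])).continuousAt.continuousWithinAt)
    (fun F hF => ?_) (fun F hF => ?_) <;> simp only [interior_Ici, mem_Ioi] at hF
  · exact (hasDerivAt_boundaryGap' (by linarith)).hasDerivWithinAt
  · have : 0 < F - 1 := by linarith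
    have : 0 < F := by linarith
    exact div_nonneg (by linarith) (by positivity)

lemma log_three_lt : log 3 < 6 / 5 := by
  have h : log 3 = log 2 + log (3 / 2) := by rw [← log_mul] <;> norm_num
  linarith [log_le_sub_one_of_pos (by norm_num : (0 : ℝ) < 3 / 2), log_two_lt_d9]

lemma boundaryGap'_three_halves_neg : boundaryGap' (3 / 2) < 0 := by
  have h : log (3 / 2) - log (3 / 2 - 1) = log 3 := by
    rw [← log_div] <;> norm_num
  rw [boundaryGap', h]
  linarith [log_three_lt]

lemma boundaryGap_three_halves : boundaryGap (3 / 2) = log (27 / 25) / 2 := by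
  have h27 : log (27 / 25) = 3 * log 3 - 2 * log 5 := by
    rw [log_div, show (27 : ℝ) = 3 ^ 3 by norm_num, show (25 : ℝ) = 5 ^ 2 by norm_num,
      log_pow, log_pow] <;> norm_num
  simp only [boundaryGap, negMulLog]
  rw [h27, show (3 : ℝ) / 2 - 1 = 2⁻¹ by norm_num, show (3 : ℝ) * (3 / 2) - 2 = 5 / 2 by norm_num,
    log_div, log_div, log_inv] <;> norm_num
  ring

lemma antitoneOn_boundaryGap : AntitoneOn boundaryGap (Icc (4 / 3) (3 / 2)) := by
  refine antitoneOn_of_hasDerivWithinAt_nonpos (f' := boundaryGap') (convex_Icc _ _)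
    (continuousOn_boundaryGap.mono fun F hF => le_trans (by norm_num) hF.1)
    (fun F hF => ?_) (fun F hF => ?_) <;> simp only [interior_Icc, mem_Ioo] at hF
  · exact (hasDerivAt_boundaryGap (by linarith)).hasDerivWithinAt
  · exact (monotoneOn_boundaryGap' (mem_Ici.2 hF.1.le) (by norm_num : (3 / 2 : ℝ) ∈ Ici (4 / 3))
      hF.2.le).trans boundaryGap'_three_halves_neg.le

lemma boundaryGap_pos {F : ℝ} (hF : 1 < F) (hF2 : F ≤ 3 / 2) : 0 < boundaryGap F := by
  have h32 : 0 < boundaryGap (3 / 2) := by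
    rw [boundaryGap_three_halves]; exact div_pos (log_pos (by norm_num)) (by norm_num)
  have h43 : 0 < boundaryGap (4 / 3) :=
    h32.trans_le (antitoneOn_boundaryGap (by norm_num) (by norm_num) (by norm_num))
  rcases le_total F (4 / 3) with hF43 | hF43
  · have h := concaveOn_boundaryGap.2 (by norm_num : (1 : ℝ) ∈ Icc 1 (4 / 3))
      (by norm_num : (4 / 3 : ℝ) ∈ Icc 1 (4 / 3)) (by linarith : 0 ≤ 4 - 3 * F)
      (by linarith : 0 ≤ 3 * F - 3) (by ring)
    have hcomb : (4 - 3 * F) • (1 : ℝ) + (3 * F - 3) • (4 / 3 : ℝ) = F := by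
      simp only [smul_eq_mul]; ring
    rw [hcomb, boundaryGap_one, smul_eq_mul, smul_eq_mul, mul_zero, zero_add] at h
    exact (mul_pos (by linarith) h43).trans_le h
  · exact h32.trans_le (antitoneOn_boundaryGap ⟨hF43, hF2⟩ (by norm_num) hF2)

lemma p1Q_neg_self {F : ℝ} (h0 : F ≠ 0) (h1 : F ≠ 1) (h2 : 2 * F ≠ 1) : p1Q (-F) F = 1 / F := by
  have h1' : 1 - F ≠ 0 := sub_ne_zero.2 h1.symm
  have h2' : 1 - 2 * F ≠ 0 := sub_ne_zero.2 h2.symm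
  have hb : bQ (-F) F = 1 / (1 - F) := by
    rw [bQ, show -F - F + 1 = 1 - 2 * F by ring, div_mul_cancel_right₀ h2', one_div]
  have hc : cQ (-F) F = -1 / (2 * F * (1 - F)) := by
    rw [cQ, show F - -F - 1 = -1 * (1 - 2 * F) by ring, mul_div_mul_right _ _ h2']
  have hdisc : bQ (-F) F ^ 2 - 4 * aQ (-F) F * cQ (-F) F = 0 := by
    rw [hb, aQ, hc]
    field_simp
    ring
  rw [p1Q, hdisc, sqrt_zero, hb, aQ]
  field_simp
  ring

lemma LQ_neg_self {F : ℝ} (h0 : F ≠ 0) (h1 : F ≠ 1) (h2 : 2 * F ≠ 1) : LQ (-F) F = 1 / F ^ 2 := by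
  have h1' : F - 1 ≠ 0 := sub_ne_zero.2 h1
  have hz : 1 - p1Q (-F) F = (F - 1) / F := by
    rw [p1Q_neg_self h0 h1 h2]; field_simp
  have hzero : -F * ((F - 1) / F - 1) - 1 = 0 := by field_simp; ring
  rw [LQ, hz, h0Q, hzero, mul_zero, zero_pow two_ne_zero, mul_zero, zero_sub]
  field_simp
  ring

lemma p1Q_neg_half {F : ℝ} (hF : 1 < F) : p1Q (-(1 / 2)) F = 1 - √((F - 1) / F) := by
  have hF0 : 0 < F := by linarith
  have hF1 : 0 < F - 1 := by linarith
  have h1F : 1 - F ≠ 0 := by linarith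
  have h12F : 1 - 2 * F ≠ 0 := by linarith
  set w := √((F - 1) / F)
  have hw2 : w ^ 2 = (F - 1) / F := sq_sqrt (by positivity)
  have hdisc : bQ (-(1 / 2)) F ^ 2 - 4 * aQ (-(1 / 2)) F * cQ (-(1 / 2)) F
      = (w / (2 * (F - 1))) ^ 2 := by
    rw [div_pow, hw2]
    unfold aQ bQ cQ
    field_simp
    ring
  rw [p1Q, hdisc, sqrt_sq (by positivity)]
  unfold aQ bQ
  field_simp
  ring

lemma sqrt_rpow_neg_two_mul {x : ℝ} (hx : 0 ≤ x) (y : ℝ) : √x ^ (-(2 * y)) = x ^ (-y) := by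
  rw [sqrt_eq_rpow, ← rpow_mul hx]
  ring_nf

lemma LQ_neg_half {F : ℝ} (hF : 1 < F) :
    LQ (-(1 / 2)) F = (F ^ F * (F - 1) ^ (1 - F) + 2 - 3 * F) / (4 * F ^ 2 * (F - 1)) := by
  have hF0 : 0 < F := by linarith
  have hF1 : 0 < F - 1 := by linarith
  have hz : 1 - p1Q (-(1 / 2)) F = √((F - 1) / F) := by rw [p1Q_neg_half hF]; ring
  have hw2 : √((F - 1) / F) ^ 2 = (F - 1) / F := sq_sqrt (by positivity)
  have hrpow : √((F - 1) / F) ^ (-(2 * F)) = F ^ F * (F - 1) ^ (1 - F) / (F - 1) := by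
    rw [sqrt_rpow_neg_two_mul (by positivity), div_rpow hF1.le hF0.le, rpow_neg hF1.le,
      rpow_neg hF0.le, rpow_sub hF1, rpow_one]
    field_simp
  have hsq : ∀ w : ℝ, ((w - 1) * (-(1 / 2) * (w - 1) - 1)) ^ 2 = (w ^ 2 - 1) ^ 2 / 4 := by
    intro w; ring
  have hh : h0Q (-(1 / 2)) F = 1 / (4 * F * (F - 1)) := by
    have h2F1 : 2 * F - 1 ≠ 0 := by linarith
    rw [h0Q, show F - -(1 / 2) - 1 = (2 * F - 1) / 2 by ring]
    field_simp
    norm_num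
  rw [LQ, hz, hh, hrpow, hsq, hw2]
  field_simp
  ring

lemma three_mul_sub_two_lt_rpow {F : ℝ} (hF : 1 < F) (hF2 : F ≤ 3 / 2) :
    3 * F - 2 < F ^ F * (F - 1) ^ (1 - F) := by
  have hF0 : 0 < F := by linarith
  have hF1 : 0 < F - 1 := by linarith
  rw [← log_lt_log_iff (by linarith) (by positivity), log_mul (by positivity) (by positivity),
    log_rpow hF0, log_rpow hF1]
  have hgap := boundaryGap_pos hF hF2
  simp only [boundaryGap, negMulLog] at hgap
  linarith

/-- At the boundary parameter values `D = -F` and `D = -1/2` of `Λ` (for `F ∈ (1,3/2)`),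
the function `L` takes the values `1/F²` and `(F^F (F-1)^(1-F) + 2 - 3F)/(4F²(F-1))`
respectively, and both are strictly positive. -/
theorem L_positive_on_boundary (F : ℝ) (hF : 1 < F) (hF2 : F < 3/2) :
    LQ (-F) F = 1/F^2
    ∧ LQ (-(1/2)) F = (F ^ F * (F-1) ^ (1-F) + 2 - 3*F)/(4*F^2*(F-1))
    ∧ 0 < LQ (-F) F
    ∧ 0 < LQ (-(1/2)) F := by
  have hF0 : F ≠ 0 := by linarith
  have hF1 : F ≠ 1 := by linarith
  have hF12 : 2 * F ≠ 1 := by linarith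
  have hF1pos : 0 < F - 1 := by linarith
  refine ⟨LQ_neg_self hF0 hF1 hF12, LQ_neg_half hF, ?_, ?_⟩
  · rw [LQ_neg_self hF0 hF1 hF12]
    positivity
  · rw [LQ_neg_half hF]
    have := three_mul_sub_two_lt_rpow hF hF2.le
    exact div_pos (by linarith) (by positivity)
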